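/- arXiv:1809.08454 — 2 statements merged into one kernel-verified Lean document; each statement's English description precedes it below -/
import Mathlib

section
/- Let A_n satisfy Assumption (A), and suppose δ₀ is a sufficiently small absolute constant. If np ≥ log(1/(C̄p)) for some C̄ ≥ 1, then for all large n, P( |L(A_n)| ≥ n^{1/3} ) ≤ n^{−1/9}. Moreover, there exists an absolute constant C such that if np ≥ C log n, then P( L(A_n) = ∅ ) ≥ 1 − 1/n. -/
open MeasureTheory ProbabilityTheory Filter Matrix

noncomputable section

/-- Euclidean norm of a vector in `ℝ^n`. -/
def vnorm {n : ℕ} (x : Fin n → ℝ) : ℝ := Real.sqrt (∑ i, x i ^ 2)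

/-- The event that a matrix has a zero row or a zero column. -/
def hasZeroRowOrCol {n : ℕ} (A : Matrix (Fin n) (Fin n) ℝ) : Prop :=
  (∃ i, ∀ j, A i j = 0) ∨ (∃ j, ∀ i, A i j = 0)

/-- The smallest singular value `s_min(A) = inf_{‖x‖₂ = 1} ‖Ax‖₂`. -/
def sMin {n : ℕ} (A : Matrix (Fin n) (Fin n) ℝ) : ℝ :=
  sInf {r | ∃ x : Fin n → ℝ, vnorm x = 1 ∧ r = vnorm (A.mulVec x)}

/-- The `ℓ₂ → ℓ₂` operator norm of a matrix. -/
def opNorm {m n : ℕ} (A : Matrix (Fin m) (Fin n) ℝ) : ℝ :=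
  sSup {r | ∃ x : Fin n → ℝ, vnorm x = 1 ∧ r = vnorm (A.mulVec x)}

/-- `X` is a Bernoulli(p) random variable: it takes the value `1` with probability `p`
and the value `0` with probability `1 - p`. -/
def IsBer {Ωs : Type*} [MeasurableSpace Ωs] (P : Measure Ωs) (p : ℝ) (X : Ωs → ℝ) : Prop :=
  Measurable X ∧ P {ω | X ω = 1} = ENNReal.ofReal p ∧ P {ω | X ω = 0} = ENNReal.ofReal (1 - p)

/-- The family `X` consists of i.i.d. Bernoulli(p) random variables. -/
def IIDBer {Ωs : Type*} [MeasurableSpace Ωs] {ι : Type*} (P : Measure Ωs) (p : ℝ)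
    (X : ι → Ωs → ℝ) : Prop :=
  iIndepFun X P ∧ ∀ i, IsBer P p (X i)

/-- Assumption (A): `{0,1}`-valued entries; diagonal and off-diagonal parts independent;
diagonal entries jointly independent, `a_{ii} ~ Ber(p_i)` with `p_i ≤ p`; each off-diagonal
entry is `Ber(p)` and independent of all other entries except possibly its mirror entry. -/
structure AssumptionA {Ωs : Type*} [MeasurableSpace Ωs] (P : Measure Ωs) {n : ℕ}
    (p : ℝ) (A : Ωs → Matrix (Fin n) (Fin n) ℝ) : Prop where
  zero_one : ∀ ω i j, A ω i j = 0 ∨ A ω i j = 1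
  diag_offdiag_indep :
    IndepFun (fun ω => fun i : Fin n => A ω i i)
      (fun ω => fun q : {q : Fin n × Fin n // q.1 ≠ q.2} => A ω q.1.1 q.1.2) P
  diag_indep : iIndepFun (fun i : Fin n => fun ω => A ω i i) P
  diag_ber : ∀ i, ∃ pi : ℝ, pi ≤ p ∧ IsBer P pi (fun ω => A ω i i)
  offdiag_ber : ∀ i j, i ≠ j → IsBer P p (fun ω => A ω i j)
  offdiag_indep : ∀ i j : Fin n, i ≠ j →
    IndepFun (fun ω => A ω i j)
      (fun ω => fun q : {q : Fin n × Fin n // q ≠ (i, j) ∧ q ≠ (j, i)} => A ω q.1.1 q.1.2) P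

/-- Support of the `j`-th column of a matrix. -/
def colSupp {m n : ℕ} (A : Matrix (Fin m) (Fin n) ℝ) (j : Fin n) : Set (Fin m) :=
  {i | A i j ≠ 0}

/-- Support of the `i`-th row of a matrix. -/
def rowSupp {m n : ℕ} (A : Matrix (Fin m) (Fin n) ℝ) (i : Fin m) : Set (Fin n) :=
  {j | A i j ≠ 0}

/-- The set of light columns: columns whose support has at most `δ₀ n p` elements. -/
def lightSet {n : ℕ} (A : Matrix (Fin n) (Fin n) ℝ) (δ₀ p : ℝ) : Set (Fin n) :=
  {j | ((colSupp A j).ncard : ℝ) ≤ δ₀ * ((n : ℝ) * p)}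

/-- The folded matrix `fold(B) = B⁽¹⁾ − B⁽²⁾`, where `B⁽¹⁾, B⁽²⁾` consist of the first and
the next `⌊n/2⌋` rows of `B`. -/
def fold {n : ℕ} (B : Matrix (Fin n) (Fin n) ℝ) : Matrix (Fin (n / 2)) (Fin n) ℝ :=
  Matrix.of fun i j =>
    B ⟨i.1, by have h := i.2; omega⟩ j - B ⟨i.1 + n / 2, by have h := i.2; omega⟩ j

/-- The structural event `Ω_st` of Lemma 2.1: (1) no heavy rows or columns; (2) light columns
have disjoint supports; (3) the number of light columns connected to any column is at most
`r₀`; (4) the support of a normal column has small intersection with those of the light ones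
(for the folded matrix); (5) the extension property; (6) supports of columns of the matrix
and of its folded version are close in size. -/
def StructEvent {n : ℕ} (A : Matrix (Fin n) (Fin n) ℝ) (p δ₀ C₁ : ℝ) (r₀ : ℕ)
    (c₂ : ℝ) : Prop :=
  (∀ i : Fin n, ((rowSupp A i).ncard : ℝ) ≤ C₁ * ((n : ℝ) * p)) ∧
  (∀ j : Fin n, ((colSupp A j).ncard : ℝ) ≤ C₁ * ((n : ℝ) * p)) ∧
  (∀ i j : Fin n, i ≠ j → i ∈ lightSet A δ₀ p → j ∈ lightSet A δ₀ p →
    colSupp A i ∩ colSupp A j = ∅) ∧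
  (∀ j : Fin n,
    ({i | i ∈ lightSet A δ₀ p ∧ (colSupp A i ∩ colSupp A j).Nonempty}.ncard : ℕ) ≤ r₀) ∧
  (∀ j : Fin n, j ∉ lightSet A δ₀ p →
    (((colSupp (fold A) j ∩ ⋃ i ∈ lightSet A δ₀ p, colSupp (fold A) i).ncard : ℝ)
      ≤ δ₀ / 16 * ((n : ℝ) * p))) ∧
  (∀ I : Finset (Fin n), 2 ≤ I.card → (I.card : ℝ) ≤ c₂ / p →
    (∑ j ∈ I, ((colSupp (fold A) j).ncard : ℝ)) - δ₀ / 16 * ((n : ℝ) * p) * I.card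
      ≤ ((⋃ j ∈ I, colSupp (fold A) j).ncard : ℝ)) ∧
  (∀ j : Fin n,
    |((colSupp A j).ncard : ℝ) - ((colSupp (fold A) j).ncard : ℝ)| ≤ δ₀ / 8 * ((n : ℝ) * p))

/-!
A column is light only if the sum of its `n - 1` independent off-diagonal `Ber(p)` entries is
at most `δ₀ n p`; taking `δ₀ ≤ 1/100`, a Chernoff bound at `t = -log 100` makes this happen
with probability at most `e · exp(-(9/10) n p)`. If `np ≥ log(1/(C̄p))` then `np ≥ (99/100) log n`
for large `n`, so each column is light with probability at most `n^{-7/9}`, and Markov's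
inequality for the number of light columns gives the first bound. If `np ≥ 10 log n`, each
column is light with probability at most `n^{-2}`, and a union bound gives the second.
-/

open scoped ENNReal

theorem mul_measure_ncard_ge_le_sum {Ω ι : Type*} [MeasurableSpace Ω] [Fintype ι]
    (μ : Measure Ω) {E : ι → Set Ω} (hE : ∀ i, MeasurableSet (E i)) (a : ℝ≥0∞) :
    a * μ {ω | a ≤ {i | ω ∈ E i}.ncard} ≤ ∑ i, μ (E i) := by
  classical
  have hcount : ∀ ω, ({i | ω ∈ E i}.ncard : ℝ≥0∞) = ∑ i, (E i).indicator 1 ω := by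
    intro ω
    rw [Set.ncard_eq_toFinset_card', Set.toFinset_ofPred, Finset.card_filter]
    push_cast
    exact Finset.sum_congr rfl fun i _ => by by_cases h : ω ∈ E i <;> simp [h]
  simp_rw [hcount]
  calc a * μ {ω | a ≤ ∑ i, (E i).indicator 1 ω}
      ≤ ∫⁻ ω, ∑ i, (E i).indicator 1 ω ∂μ :=
        mul_meas_ge_le_lintegral₀
          (Finset.aemeasurable_fun_sum _ fun i _ => aemeasurable_one.indicator (hE i)) a
    _ = ∑ i, μ (E i) := by
        rw [lintegral_finsetSum _ fun i _ => measurable_one.indicator (hE i)]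
        simp_rw [lintegral_indicator_one (hE _)]

theorem IsBer.mgf_eq {Ω : Type*} [MeasurableSpace Ω] {P : Measure Ω} [IsProbabilityMeasure P]
    {p : ℝ} {X : Ω → ℝ} (hX : IsBer P p X) (h01 : ∀ ω, X ω = 0 ∨ X ω = 1) (hp : 0 ≤ p)
    (t : ℝ) : mgf X P t = 1 + (Real.exp t - 1) * p := by
  obtain ⟨hm, h1, -⟩ := hX
  have hs : MeasurableSet {ω | X ω = 1} := hm (measurableSet_singleton 1)
  have hX_eq : X = {ω | X ω = 1}.indicator 1 := by
    funext ω
    rcases h01 ω with h | h <;> simp [h]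
  have hmean : ∫ ω, X ω ∂P = p := by
    rw [hX_eq, integral_indicator_one hs, measureReal_def, h1, ENNReal.toReal_ofReal hp]
  have hexp : ∀ ω, Real.exp (t * X ω) = 1 + (Real.exp t - 1) * X ω := by
    intro ω
    rcases h01 ω with h | h <;> simp [h]
  have hint : Integrable X P := by
    rw [hX_eq]
    exact (integrable_const 1).indicator hs
  simp_rw [mgf, hexp]
  rw [integral_add (integrable_const 1) (hint.const_mul _), integral_const_mul, hmean]
  simp

theorem mul_log_le_of_log_one_div_mul_le {n Cb p : ℝ} (hn : 1 ≤ n) (hCb : 0 < Cb) (hp : 0 < p)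
    (hlog : Real.log (Cb * Real.log n) ≤ Real.log n / 100)
    (h : Real.log (1 / (Cb * p)) ≤ n * p) : 99 / 100 * Real.log n ≤ n * p := by
  have hL : 0 ≤ Real.log n := Real.log_nonneg hn
  rcases le_or_gt (Real.log n) (n * p) with hle | hlt
  · linarith
  · have hsplit : Real.log (1 / (Cb * p)) = Real.log n - Real.log (Cb * (n * p)) := by
      rw [← Real.log_div (by positivity) (by positivity)]
      congr 1
      field_simp
    have hmono : Real.log (Cb * (n * p)) ≤ Real.log (Cb * Real.log n) :=
      Real.log_le_log (by positivity) (by gcongr)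
    linarith

theorem eventually_log_mul_log_le {Cb : ℝ} (hCb : 0 < Cb) :
    ∀ᶠ n : ℕ in atTop, Real.log (Cb * Real.log n) ≤ Real.log n / 100 := by
  have hlog : Tendsto (fun n : ℕ => Real.log n) atTop atTop :=
    Real.tendsto_log_atTop.comp tendsto_natCast_atTop_atTop
  have hCblog : Tendsto (fun n : ℕ => Cb * Real.log n) atTop atTop :=
    hlog.const_mul_atTop hCb
  have hsmall := (Real.isLittleO_log_id_atTop.comp_tendsto hCblog).def
    (by positivity : (0 : ℝ) < 1 / (100 * Cb))
  filter_upwards [hsmall, hCblog.eventually_ge_atTop 0] with n hn hpos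
  calc Real.log (Cb * Real.log n) ≤ ‖Real.log (Cb * Real.log n)‖ := Real.le_norm_self _
    _ ≤ 1 / (100 * Cb) * ‖Cb * Real.log n‖ := hn
    _ = Real.log n / 100 := by
        rw [Real.norm_of_nonneg hpos]
        field_simp

theorem Real.log_hundred_le_five : Real.log 100 ≤ 5 := by
  have h : Real.log 100 ≤ Real.log (2 ^ 7) := Real.log_le_log (by norm_num) (by norm_num)
  rw [Real.log_pow, Nat.cast_ofNat] at h
  linarith [Real.log_two_lt_d9]

theorem chernoff_light_bound {n : ℕ} {p δ₀ : ℝ} (hn : 1 ≤ n) (hp0 : 0 ≤ p) (hp1 : p ≤ 1)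
    (hδ : δ₀ ≤ 1 / 100) :
    Real.exp (-(-Real.log 100) * (δ₀ * (n * p))) *
        (1 + (Real.exp (-Real.log 100) - 1) * p) ^ (n - 1)
      ≤ Real.exp (1 - 9 / 10 * (n * p)) := by
  have hnp : 0 ≤ (n : ℝ) * p := by positivity
  have hbase : 1 + (Real.exp (-Real.log 100) - 1) * p ≤ Real.exp (-(99 / 100) * p) := by
    rw [Real.exp_neg, Real.exp_log (by norm_num)]
    linarith [Real.add_one_le_exp (-(99 / 100) * p)]
  have hpow : (1 + (Real.exp (-Real.log 100) - 1) * p) ^ (n - 1)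
      ≤ Real.exp (-(99 / 100) * ((n : ℝ) - 1) * p) := by
    calc (1 + (Real.exp (-Real.log 100) - 1) * p) ^ (n - 1)
        ≤ Real.exp (-(99 / 100) * p) ^ (n - 1) := by
          refine pow_le_pow_left₀ ?_ hbase _
          rw [Real.exp_neg, Real.exp_log (by norm_num)]
          nlinarith
      _ = Real.exp (-(99 / 100) * ((n : ℝ) - 1) * p) := by
          rw [← Real.exp_nat_mul, Nat.cast_sub hn]
          ring_nf
  have hδlog : Real.log 100 * (δ₀ * (n * p)) ≤ 5 / 100 * (n * p) := by
    have : Real.log 100 * δ₀ ≤ 5 / 100 := by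
      nlinarith [Real.log_hundred_le_five, Real.log_nonneg (by norm_num : (1 : ℝ) ≤ 100)]
    nlinarith
  calc _ ≤ Real.exp (Real.log 100 * (δ₀ * (n * p))) *
        Real.exp (-(99 / 100) * ((n : ℝ) - 1) * p) := by
        rw [neg_neg]
        gcongr
    _ ≤ Real.exp (1 - 9 / 10 * (n * p)) := by
        rw [← Real.exp_add]
        gcongr
        nlinarith

theorem colSupp_ncard_eq_sum {m n : ℕ} {B : Matrix (Fin m) (Fin n) ℝ} {j : Fin n}
    (h01 : ∀ i, B i j = 0 ∨ B i j = 1) : ((colSupp B j).ncard : ℝ) = ∑ i, B i j := by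
  classical
  rw [show colSupp B j = ↑(Finset.univ.filter fun i => B i j ≠ 0) by ext; simp [colSupp],
    Set.ncard_coe_finset, Finset.card_filter]
  push_cast
  exact Finset.sum_congr rfl fun i _ => by rcases h01 i with h | h <;> simp [h]

namespace AssumptionA

variable {Ω : Type*} [MeasurableSpace Ω] {P : Measure Ω} {n : ℕ} {p : ℝ}
  {A : Ω → Matrix (Fin n) (Fin n) ℝ}

theorem measurable_entry (hA : AssumptionA P p A) (i j : Fin n) :
    Measurable fun ω => A ω i j := by
  by_cases h : i = j
  · subst h
    obtain ⟨_, -, hm, -⟩ := hA.diag_ber i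
    exact hm
  · exact (hA.offdiag_ber i j h).1

theorem measurableSet_mem_lightSet (hA : AssumptionA P p A) (δ₀ : ℝ) (j : Fin n) :
    MeasurableSet {ω | j ∈ lightSet (A ω) δ₀ p} := by
  have hcount : (fun ω => ((colSupp (A ω) j).ncard : ℝ)) = fun ω => ∑ i, A ω i j :=
    funext fun ω => colSupp_ncard_eq_sum fun i => hA.zero_one ω i j
  exact measurableSet_le (hcount ▸ Finset.measurable_sum _ fun i _ => hA.measurable_entry i j)
    measurable_const

-- Only the mirror entry `(j, i)` may depend on `(i, j)`, and it lies outside column `j`.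
theorem indepFun_entry_colSum (hA : AssumptionA P p A) {i j : Fin n} {s : Finset (Fin n)}
    (hij : i ≠ j) (hi : i ∉ s) (hj : j ∉ s) :
    IndepFun (fun ω => A ω i j) (fun ω => ∑ k ∈ s, A ω k j) P := by
  have hmem : ∀ k ∈ s, (k, j) ≠ (i, j) ∧ (k, j) ≠ (j, i) := fun k hk =>
    ⟨by simp [ne_of_mem_of_not_mem hk hi], by simp [ne_of_mem_of_not_mem hk hj]⟩
  let colSum : ({q : Fin n × Fin n // q ≠ (i, j) ∧ q ≠ (j, i)} → ℝ) → ℝ :=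
    fun F => ∑ k ∈ s.attach, F ⟨(k.1, j), hmem k.1 k.2⟩
  have hmeas : Measurable colSum := Finset.measurable_sum _ fun k _ => measurable_pi_apply _
  have hcomp : (colSum ∘ fun ω q => A ω q.1.1 q.1.2) = fun ω => ∑ k ∈ s, A ω k j :=
    funext fun ω => Finset.sum_attach s fun k => A ω k j
  have hind := (hA.offdiag_indep i j hij).comp measurable_id hmeas
  rw [hcomp] at hind
  exact hind

theorem mgf_colSum [IsProbabilityMeasure P] (hA : AssumptionA P p A) (hp : 0 ≤ p)
    {j : Fin n} {s : Finset (Fin n)} (hj : j ∉ s) (t : ℝ) :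
    mgf (fun ω => ∑ i ∈ s, A ω i j) P t = (1 + (Real.exp t - 1) * p) ^ s.card := by
  classical
  induction s using Finset.induction_on with
  | empty => simp
  | @insert i s hi ih =>
    have hij : i ≠ j := fun h => hj (h ▸ Finset.mem_insert_self i s)
    have hjs : j ∉ s := fun h => hj (Finset.mem_insert_of_mem h)
    have hsum : (fun ω => ∑ k ∈ insert i s, A ω k j)
        = (fun ω => A ω i j) + fun ω => ∑ k ∈ s, A ω k j := by
      funext ω
      simp [Finset.sum_insert hi]
    have hmX := (hA.measurable_entry i j).const_mul t |>.exp
    have hmS := (Finset.measurable_sum s fun k _ => hA.measurable_entry k j).const_mul t |>.exp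
    rw [hsum, (hA.indepFun_entry_colSum hij hi hjs).mgf_add hmX.aestronglyMeasurable
      hmS.aestronglyMeasurable, ih hjs, (hA.offdiag_ber i j hij).mgf_eq
      (fun ω => hA.zero_one ω i j) hp, Finset.card_insert_of_notMem hi, pow_succ']

theorem measure_mem_lightSet_le [IsProbabilityMeasure P] (hA : AssumptionA P p A)
    (hp0 : 0 ≤ p) (hp1 : p ≤ 1) {δ₀ : ℝ} (hδ : δ₀ ≤ 1 / 100) (j : Fin n) :
    P {ω | j ∈ lightSet (A ω) δ₀ p} ≤ ENNReal.ofReal (Real.exp (1 - 9 / 10 * (n * p))) := by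
  set S : Ω → ℝ := fun ω => ∑ i ∈ Finset.univ.erase j, A ω i j
  have hS_nonneg : ∀ ω, 0 ≤ S ω := fun ω =>
    Finset.sum_nonneg fun i _ => by rcases hA.zero_one ω i j with h | h <;> simp [h]
  have hsub : {ω | j ∈ lightSet (A ω) δ₀ p} ⊆ {ω | S ω ≤ δ₀ * (n * p)} := by
    intro ω (hω : ((colSupp (A ω) j).ncard : ℝ) ≤ δ₀ * (n * p))
    refine le_trans ?_ hω
    rw [colSupp_ncard_eq_sum fun i => hA.zero_one ω i j]
    exact Finset.sum_le_sum_of_subset_of_nonneg (Finset.subset_univ _) fun i _ _ => by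
      rcases hA.zero_one ω i j with h | h <;> simp [h]
  have ht : -Real.log 100 ≤ 0 := neg_nonpos.mpr (Real.log_nonneg (by norm_num))
  have hint : Integrable (fun ω => Real.exp (-Real.log 100 * S ω)) P := by
    have hmeas : Measurable fun ω => Real.exp (-Real.log 100 * S ω) :=
      ((Finset.measurable_sum _ fun i _ => hA.measurable_entry i j).const_mul _).exp
    refine (integrable_const (1 : ℝ)).mono' hmeas.aestronglyMeasurable
      (Eventually.of_forall fun ω => ?_)
    rw [Real.norm_of_nonneg (Real.exp_pos _).le, Real.exp_le_one_iff]
    exact mul_nonpos_of_nonpos_of_nonneg ht (hS_nonneg ω)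
  have hchernoff := measure_le_le_exp_mul_mgf (δ₀ * (n * p)) ht hint
  rw [hA.mgf_colSum hp0 (Finset.notMem_erase j _), Finset.card_erase_of_mem (Finset.mem_univ j),
    Finset.card_univ, Fintype.card_fin] at hchernoff
  calc P {ω | j ∈ lightSet (A ω) δ₀ p} ≤ P {ω | S ω ≤ δ₀ * (n * p)} := measure_mono hsub
    _ = ENNReal.ofReal (P.real {ω | S ω ≤ δ₀ * (n * p)}) := (ofReal_measureReal).symm
    _ ≤ _ := ENNReal.ofReal_le_ofReal
        (hchernoff.trans (chernoff_light_bound j.pos hp0 hp1 hδ))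

theorem measure_ncard_lightSet_ge_le [IsProbabilityMeasure P] (hA : AssumptionA P p A)
    (hp0 : 0 ≤ p) (hp1 : p ≤ 1) {δ₀ : ℝ} (hδ : δ₀ ≤ 1 / 100) (hn : 0 < n)
    (hnp : 1 + 7 / 9 * Real.log n ≤ 9 / 10 * (n * p)) :
    P {ω | (n : ℝ) ^ ((1 : ℝ) / 3) ≤ ((lightSet (A ω) δ₀ p).ncard : ℝ)}
      ≤ ENNReal.ofReal ((n : ℝ) ^ (-(1 : ℝ) / 9)) := by
  have hn0 : (0 : ℝ) < n := Nat.cast_pos.mpr hn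
  have hlight : Real.exp (1 - 9 / 10 * (n * p)) ≤ (n : ℝ) ^ (-(7 : ℝ) / 9) := by
    rw [Real.rpow_def_of_pos hn0]
    exact Real.exp_le_exp.mpr (by linarith)
  have hexp : (n : ℝ) * (n : ℝ) ^ (-(7 : ℝ) / 9)
      = (n : ℝ) ^ ((1 : ℝ) / 3) * (n : ℝ) ^ (-(1 : ℝ) / 9) := by
    rw [← Real.rpow_add hn0, ← Real.rpow_one_add' hn0.le (by norm_num)]
    norm_num
  set a := ENNReal.ofReal ((n : ℝ) ^ ((1 : ℝ) / 3))
  have ha : a ≠ 0 := ENNReal.ofReal_pos.mpr (Real.rpow_pos_of_pos hn0 _) |>.ne'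
  have hmarkov := mul_measure_ncard_ge_le_sum P (hA.measurableSet_mem_lightSet δ₀) a
  refine (ENNReal.mul_le_mul_iff_right ha ENNReal.ofReal_ne_top).mp ?_
  calc a * P {ω | (n : ℝ) ^ ((1 : ℝ) / 3) ≤ ((lightSet (A ω) δ₀ p).ncard : ℝ)}
      ≤ ∑ j : Fin n, P {ω | j ∈ lightSet (A ω) δ₀ p} := by
        refine le_trans (mul_le_mul_right (measure_mono fun ω hω => ?_) a) hmarkov
        exact (ENNReal.ofReal_le_ofReal hω).trans_eq (ENNReal.ofReal_natCast _)
    _ ≤ ∑ _j : Fin n, ENNReal.ofReal ((n : ℝ) ^ (-(7 : ℝ) / 9)) :=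
        Finset.sum_le_sum fun j _ => (hA.measure_mem_lightSet_le hp0 hp1 hδ j).trans
          (ENNReal.ofReal_le_ofReal hlight)
    _ = a * ENNReal.ofReal ((n : ℝ) ^ (-(1 : ℝ) / 9)) := by
        rw [Finset.sum_const, Finset.card_univ, Fintype.card_fin, nsmul_eq_mul,
          ← ENNReal.ofReal_natCast, ← ENNReal.ofReal_mul hn0.le, hexp,
          ENNReal.ofReal_mul (by positivity)]

theorem ofReal_one_sub_one_div_le_measure_lightSet_eq_empty [IsProbabilityMeasure P]
    (hA : AssumptionA P p A) (hp0 : 0 ≤ p) (hp1 : p ≤ 1) {δ₀ : ℝ} (hδ : δ₀ ≤ 1 / 100)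
    (hnp : 1 + 2 * Real.log n ≤ 9 / 10 * (n * p)) :
    ENNReal.ofReal (1 - 1 / n) ≤ P {ω | lightSet (A ω) δ₀ p = ∅} := by
  have hn0 : (0 : ℝ) < n := by
    rcases n.eq_zero_or_pos with rfl | hn
    · norm_num at hnp
    · exact Nat.cast_pos.mpr hn
  have hlight : (n : ℝ) * Real.exp (1 - 9 / 10 * (n * p)) ≤ 1 / n := by
    calc (n : ℝ) * Real.exp (1 - 9 / 10 * (n * p))
        = Real.exp (Real.log n + (1 - 9 / 10 * (n * p))) := by
          rw [Real.exp_add, Real.exp_log hn0]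
      _ ≤ Real.exp (-Real.log n) := Real.exp_le_exp.mpr (by linarith)
      _ = 1 / n := by rw [Real.exp_neg, Real.exp_log hn0, one_div]
  have hunion : P (⋃ j, {ω | j ∈ lightSet (A ω) δ₀ p}) ≤ ENNReal.ofReal (1 / n) :=
    calc P (⋃ j, {ω | j ∈ lightSet (A ω) δ₀ p})
        ≤ ∑ j : Fin n, P {ω | j ∈ lightSet (A ω) δ₀ p} := measure_iUnion_fintype_le P _
      _ ≤ ∑ _j : Fin n, ENNReal.ofReal (Real.exp (1 - 9 / 10 * (n * p))) :=
          Finset.sum_le_sum fun j _ => hA.measure_mem_lightSet_le hp0 hp1 hδ j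
      _ ≤ ENNReal.ofReal (1 / n) := by
          rw [Finset.sum_const, Finset.card_univ, Fintype.card_fin, nsmul_eq_mul,
            ← ENNReal.ofReal_natCast, ← ENNReal.ofReal_mul hn0.le]
          exact ENNReal.ofReal_le_ofReal hlight
  have hcompl : {ω | lightSet (A ω) δ₀ p = ∅} = (⋃ j, {ω | j ∈ lightSet (A ω) δ₀ p})ᶜ := by
    ext ω
    simp [Set.eq_empty_iff_forall_notMem]
  rw [hcompl, prob_compl_eq_one_sub (MeasurableSet.iUnion (hA.measurableSet_mem_lightSet δ₀)),
    ENNReal.ofReal_sub _ (by positivity), ENNReal.ofReal_one]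
  exact tsub_le_tsub_left hunion 1

end AssumptionA

/-- bounds on the number of light columns. If `np ≥ log(1/(C̄p))` then
`|L(A_n)| < n^{1/3}` except with probability `n^{-1/9}`, and if `np ≥ C log n` then there
are no light columns except with probability `1/n`. -/
theorem light_columns_card_bound :
    ∃ δs C : ℝ, 0 < δs ∧ δs < 1 / 10 ∧ 0 < C ∧
      ∀ δ₀ : ℝ, 0 < δ₀ → δ₀ ≤ δs →
        ((∀ Cb : ℝ, 1 ≤ Cb →
            ∃ N : ℕ, ∀ n, N ≤ n →
              ∀ (p : ℝ) (Ωs : Type) [MeasurableSpace Ωs] (P : Measure Ωs),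
                IsProbabilityMeasure P →
                ∀ A : Ωs → Matrix (Fin n) (Fin n) ℝ,
                  0 < p → p < 1 → Real.log (1 / (Cb * p)) ≤ (n : ℝ) * p →
                  AssumptionA P p A →
                  P {ω | (n : ℝ) ^ ((1 : ℝ) / 3) ≤ ((lightSet (A ω) δ₀ p).ncard : ℝ)}
                    ≤ ENNReal.ofReal ((n : ℝ) ^ (-(1 : ℝ) / 9))) ∧
          (∀ (n : ℕ) (p : ℝ) (Ωs : Type) [MeasurableSpace Ωs] (P : Measure Ωs),
              IsProbabilityMeasure P →
              ∀ A : Ωs → Matrix (Fin n) (Fin n) ℝ,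
                0 < p → p < 1 → C * Real.log n ≤ (n : ℝ) * p →
                AssumptionA P p A →
                ENNReal.ofReal (1 - 1 / n) ≤ P {ω | lightSet (A ω) δ₀ p = ∅})) := by
  refine ⟨1 / 100, 10, by norm_num, by norm_num, by norm_num,
    fun δ₀ _ hδ => ⟨fun Cb hCb => ?_, ?_⟩⟩
  · have hlog : Tendsto (fun n : ℕ => Real.log n) atTop atTop :=
      Real.tendsto_log_atTop.comp tendsto_natCast_atTop_atTop
    obtain ⟨N, hN⟩ := eventually_atTop.mp <| (eventually_log_mul_log_le (by linarith)).and <|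
      (hlog.eventually_ge_atTop 9).and (eventually_ge_atTop 1)
    refine ⟨N, fun n hn p Ωs _ P hP A hp0 hp1 hnp hA => ?_⟩
    obtain ⟨hsmall, hlog9, hn1⟩ := hN n hn
    have hnp' := mul_log_le_of_log_one_div_mul_le (by exact_mod_cast hn1) (by linarith) hp0 hsmall hnp
    exact hA.measure_ncard_lightSet_ge_le hp0.le hp1.le hδ hn1 (by linarith)
  · intro n p Ωs _ P hP A hp0 hp1 hnp hA
    rcases Nat.lt_or_ge n 2 with hn | hn
    · interval_cases n
      · simp [Set.eq_empty_of_isEmpty]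
      · simp
    · have hlog2 : Real.log 2 ≤ Real.log n := Real.log_le_log (by norm_num) (by exact_mod_cast hn)
      exact hA.ofReal_one_sub_one_div_le_measure_lightSet_eq_empty hp0.le hp1.le hδ
        (by linarith [Real.log_two_gt_d9])
end
end

section
/- Fix K ≥ 1. There exists a constant N(K) such that the following holds for every n and every p ∈ (0,1) with np ≥ N(K): if A is a real n×n matrix with ‖A − p J_n‖ ≤ K √(np), then (i) A has a real eigenvalue λ₀ with |λ₀| ≥ np/2, and (ii) there is a corresponding eigenvector v₀ ∈ S^{n−1} satisfying ‖v₀ − n^{−1/2} 𝟏‖₂ ≤ 16K/√(np), where 𝟏 ∈ R^n is the all-ones vector. -/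
open MeasureTheory ProbabilityTheory Filter Matrix

noncomputable section

/-!
Write `A = M u uᵀ + E` with `u = n^{-1/2} 𝟏`, `M = np` and `‖E‖ ≤ ε = K √(np) ≤ M / 8`.
For `w ⊥ u`, the vector `u + w` is an eigenvector, with eigenvalue `M + ⟪u, E (u + w)⟫`, as soon
as `w` is a fixed point of `w ↦ (M + ⟪u, E (u + w)⟫)⁻¹ • P (E (u + w))`, where
`P z = z - ⟪u, z⟫ • u` is the orthogonal projection onto `u^⊥`.
Its denominator is at least `3M/4` and its numerator at most `2ε` on the unit ball of `u^⊥`,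
so this map sends that ball into the ball of radius `8ε / 3M` and is a contraction there.
Banach's fixed point theorem gives `w`, and normalising `u + w` costs at most a factor `2`.
-/

open scoped RealInnerProductSpace
open InnerProductSpace

lemma norm_inv_smul_sub_inv_smul_le {E : Type*} [NormedAddCommGroup E] [NormedSpace ℝ E]
    {a b m B : ℝ} {x y : E} (hm : 0 < m) (ha : m ≤ a) (hb : m ≤ b) (hy : ‖y‖ ≤ B) :
    ‖a⁻¹ • x - b⁻¹ • y‖ ≤ ‖x - y‖ / m + B * |a - b| / m ^ 2 := by
  have ha₀ : 0 < a := hm.trans_le ha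
  have hb₀ : 0 < b := hm.trans_le hb
  have hinv : |a⁻¹ - b⁻¹| ≤ |a - b| / m ^ 2 := by
    rw [inv_sub_inv ha₀.ne' hb₀.ne', abs_div, abs_sub_comm, abs_mul, abs_of_pos ha₀,
      abs_of_pos hb₀, sq]
    gcongr
  calc ‖a⁻¹ • x - b⁻¹ • y‖ = ‖a⁻¹ • (x - y) + (a⁻¹ - b⁻¹) • y‖ := by
        congr 1; module
    _ ≤ a⁻¹ * ‖x - y‖ + |a⁻¹ - b⁻¹| * ‖y‖ := by
        grw [norm_add_le, norm_smul, norm_smul, Real.norm_of_nonneg (inv_nonneg.mpr ha₀.le),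
          Real.norm_eq_abs]
    _ ≤ ‖x - y‖ / m + |a - b| / m ^ 2 * B := by
        rw [inv_mul_eq_div]
        gcongr
    _ = ‖x - y‖ / m + B * |a - b| / m ^ 2 := by ring

section

variable {V : Type*} [NormedAddCommGroup V] [InnerProductSpace ℝ V]

lemma norm_sub_inner_smul_le {u : V} (hu : ‖u‖ = 1) (z : V) : ‖z - ⟪u, z⟫ • u‖ ≤ ‖z‖ := by
  simpa [Submodule.starProjection_orthogonal_val, Submodule.starProjection_singleton, hu]
    using (ℝ ∙ u)ᗮ.norm_starProjection_apply_le z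

lemma norm_normalize_sub_le {u : V} (hu : ‖u‖ = 1) (x : V) :
    ‖NormedSpace.normalize x - u‖ ≤ 2 * ‖x - u‖ := by
  have hx : ‖NormedSpace.normalize x - x‖ ≤ ‖x - u‖ := by
    rcases eq_or_ne x 0 with rfl | hx₀
    · simp [hu]
    calc ‖NormedSpace.normalize x - x‖ = |(‖x‖⁻¹ - 1) * ‖x‖| := by
          rw [NormedSpace.normalize, show ‖x‖⁻¹ • x - x = (‖x‖⁻¹ - 1) • x by module, norm_smul,
            Real.norm_eq_abs, abs_mul, abs_norm]
      _ = |‖x‖ - ‖u‖| := by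
          rw [hu, sub_mul, inv_mul_cancel₀ (norm_ne_zero_iff.mpr hx₀), one_mul, abs_sub_comm]
      _ ≤ ‖x - u‖ := abs_norm_sub_norm_le x u
  calc ‖NormedSpace.normalize x - u‖ ≤ ‖NormedSpace.normalize x - x‖ + ‖x - u‖ :=
        norm_sub_le_norm_sub_add_norm_sub _ _ _
    _ ≤ 2 * ‖x - u‖ := by linarith

def eigenCorrection (M : ℝ) (u : V) (T : V →L[ℝ] V) (w : V) : V :=
  (M + ⟪u, T (u + w)⟫)⁻¹ • (T (u + w) - ⟪u, T (u + w)⟫ • u)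

variable {M ε : ℝ} {u w w' : V} {T : V →L[ℝ] V}

lemma norm_apply_add_le (hu : ‖u‖ = 1) (hT : ‖T‖ ≤ ε) (hw : ‖w‖ ≤ 1) :
    ‖T (u + w)‖ ≤ 2 * ε := by
  have hε : 0 ≤ ε := (norm_nonneg T).trans hT
  calc ‖T (u + w)‖ ≤ ε * ‖u + w‖ := T.le_of_opNorm_le hT _
    _ ≤ ε * (1 + 1) := by grw [norm_add_le, hu, hw]
    _ = 2 * ε := by ring

lemma le_add_inner_apply_add (hu : ‖u‖ = 1) (hT : ‖T‖ ≤ ε) (hεM : 8 * ε ≤ M) (hw : ‖w‖ ≤ 1) :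
    3 * M / 4 ≤ M + ⟪u, T (u + w)⟫ := by
  have h := abs_real_inner_le_norm u (T (u + w))
  rw [hu, one_mul] at h
  linarith [neg_abs_le ⟪u, T (u + w)⟫, norm_apply_add_le hu hT hw]

lemma inner_eigenCorrection (hu : ‖u‖ = 1) (w : V) : ⟪u, eigenCorrection M u T w⟫ = 0 := by
  simp [eigenCorrection, inner_smul_right, inner_sub_right, hu]

lemma norm_eigenCorrection_le (hM : 0 < M) (hu : ‖u‖ = 1) (hT : ‖T‖ ≤ ε) (hεM : 8 * ε ≤ M)
    (hw : ‖w‖ ≤ 1) : ‖eigenCorrection M u T w‖ ≤ 8 * ε / (3 * M) := by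
  have hε : 0 ≤ ε := (norm_nonneg T).trans hT
  have hlam := le_add_inner_apply_add hu hT hεM hw
  rw [eigenCorrection, norm_smul, Real.norm_of_nonneg (inv_nonneg.mpr (by linarith)),
    inv_mul_eq_div]
  calc _ ≤ 2 * ε / (3 * M / 4) :=
        div_le_div₀ (by positivity)
          ((norm_sub_inner_smul_le hu _).trans (norm_apply_add_le hu hT hw)) (by positivity) hlam
    _ = 8 * ε / (3 * M) := by field_simp; ring

lemma norm_eigenCorrection_sub_le (hM : 0 < M) (hu : ‖u‖ = 1) (hT : ‖T‖ ≤ ε)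
    (hεM : 8 * ε ≤ M) (hw : ‖w‖ ≤ 1) (hw' : ‖w'‖ ≤ 1) :
    ‖eigenCorrection M u T w - eigenCorrection M u T w'‖ ≤ ‖w - w'‖ / 2 := by
  have hε : 0 ≤ ε := (norm_nonneg T).trans hT
  have hT_sub : ‖T (u + w) - T (u + w')‖ ≤ ε * ‖w - w'‖ := by
    rw [← map_sub, add_sub_add_left_eq_sub]
    exact T.le_of_opNorm_le hT _
  have hnum : ‖(T (u + w) - ⟪u, T (u + w)⟫ • u) - (T (u + w') - ⟪u, T (u + w')⟫ • u)‖ ≤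
      ε * ‖w - w'‖ := by
    rw [show (T (u + w) - ⟪u, T (u + w)⟫ • u) - (T (u + w') - ⟪u, T (u + w')⟫ • u) =
        (T (u + w) - T (u + w')) - ⟪u, T (u + w) - T (u + w')⟫ • u by
      rw [inner_sub_right]; module]
    exact (norm_sub_inner_smul_le hu _).trans hT_sub
  have hden : |(M + ⟪u, T (u + w)⟫) - (M + ⟪u, T (u + w')⟫)| ≤ ε * ‖w - w'‖ := by
    rw [add_sub_add_left_eq_sub, ← inner_sub_right]
    refine (abs_real_inner_le_norm _ _).trans ?_
    rw [hu, one_mul]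
    exact hT_sub
  have h := norm_inv_smul_sub_inv_smul_le (x := T (u + w) - ⟪u, T (u + w)⟫ • u)
    (by positivity : 0 < 3 * M / 4)
    (le_add_inner_apply_add hu hT hεM hw) (le_add_inner_apply_add hu hT hεM hw')
    ((norm_sub_inner_smul_le hu _).trans (norm_apply_add_le hu hT hw'))
  have hr : ε / (3 * M / 4) ≤ 1 / 6 := by rw [div_le_iff₀ (by positivity)]; linarith
  calc _ ≤ ε * ‖w - w'‖ / (3 * M / 4) + 2 * ε * (ε * ‖w - w'‖) / (3 * M / 4) ^ 2 := by
        refine h.trans ?_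
        gcongr
    _ = (ε / (3 * M / 4) + 2 * (ε / (3 * M / 4)) ^ 2) * ‖w - w'‖ := by ring
    _ ≤ ‖w - w'‖ / 2 := by
        have : ε / (3 * M / 4) + 2 * (ε / (3 * M / 4)) ^ 2 ≤ 1 / 2 := by
          nlinarith [div_nonneg hε (by positivity : (0 : ℝ) ≤ 3 * M / 4)]
        nlinarith [norm_nonneg (w - w')]

lemma exists_isFixedPt_eigenCorrection [CompleteSpace V] (hM : 0 < M) (hu : ‖u‖ = 1)
    (hT : ‖T‖ ≤ ε) (hεM : 8 * ε ≤ M) :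
    ∃ w, ⟪u, w⟫ = 0 ∧ ‖w‖ ≤ 8 * ε / (3 * M) ∧ Function.IsFixedPt (eigenCorrection M u T) w := by
  set s : Set V := {w | ⟪u, w⟫ = 0} ∩ Metric.closedBall 0 1
  have hs : IsComplete s :=
    ((isClosed_eq (continuous_const.inner continuous_id) continuous_const).inter
      Metric.isClosed_closedBall).isComplete
  have hsmall : 8 * ε / (3 * M) ≤ 1 := by rw [div_le_one (by positivity)]; linarith
  have hmaps : Set.MapsTo (eigenCorrection M u T) s s := fun w hw =>
    ⟨inner_eigenCorrection hu w, mem_closedBall_zero_iff.2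
      ((norm_eigenCorrection_le hM hu hT hεM (mem_closedBall_zero_iff.1 hw.2)).trans hsmall)⟩
  have hcontr : ContractingWith (1 / 2) (hmaps.restrict _ s s) := by
    refine ⟨by norm_num, LipschitzWith.of_dist_le_mul fun w w' => ?_⟩
    simpa [Subtype.dist_eq, dist_eq_norm, div_eq_inv_mul] using
      norm_eigenCorrection_sub_le hM hu hT hεM (mem_closedBall_zero_iff.1 w.2.2)
        (mem_closedBall_zero_iff.1 w'.2.2)
  obtain ⟨w, hws, hfix, -⟩ := hcontr.exists_fixedPoint' hs hmaps (x := 0)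
    ⟨inner_zero_right u, Metric.mem_closedBall_self zero_le_one⟩ (edist_ne_top _ _)
  refine ⟨w, hws.1, ?_, hfix⟩
  rw [← hfix.eq]
  exact norm_eigenCorrection_le hM hu hT hεM (mem_closedBall_zero_iff.1 hws.2)

lemma rankOne_add_apply_of_isFixedPt (hu : ‖u‖ = 1) (hlam : M + ⟪u, T (u + w)⟫ ≠ 0)
    (hw : ⟪u, w⟫ = 0) (hfix : Function.IsFixedPt (eigenCorrection M u T) w) :
    (M • rankOne ℝ u u + T) (u + w) = (M + ⟪u, T (u + w)⟫) • (u + w) := by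
  have h : (M + ⟪u, T (u + w)⟫) • w = T (u + w) - ⟪u, T (u + w)⟫ • u := by
    calc (M + ⟪u, T (u + w)⟫) • w = (M + ⟪u, T (u + w)⟫) • eigenCorrection M u T w := by
          rw [hfix.eq]
      _ = T (u + w) - ⟪u, T (u + w)⟫ • u := by
          rw [eigenCorrection, smul_smul, mul_inv_cancel₀ hlam, one_smul]
  simp only [_root_.add_apply, _root_.smul_apply, rankOne_apply,
    inner_add_right, hw, real_inner_self_eq_norm_sq, hu]
  rw [smul_add (M + _) u w, h]
  module

theorem exists_eigenvector_near_of_rankOne_add [CompleteSpace V] (hM : 0 < M) (hu : ‖u‖ = 1)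
    (hT : ‖T‖ ≤ ε) (hεM : 8 * ε ≤ M) :
    ∃ (lam : ℝ) (v : V), ‖v‖ = 1 ∧ (M • rankOne ℝ u u + T) v = lam • v ∧ 3 * M / 4 ≤ lam ∧
      ‖v - u‖ ≤ 16 * ε / (3 * M) := by
  obtain ⟨w, hw, hwε, hfix⟩ := exists_isFixedPt_eigenCorrection hM hu hT hεM
  have hw₁ : ‖w‖ ≤ 1 := hwε.trans (by rw [div_le_one (by positivity)]; linarith)
  have hlam := le_add_inner_apply_add hu hT hεM hw₁
  have huw : u + w ≠ 0 := fun h => by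
    simpa [inner_add_right, hw, real_inner_self_eq_norm_sq, hu] using congrArg (⟪u, ·⟫) h
  refine ⟨_, NormedSpace.normalize (u + w), NormedSpace.norm_normalize_eq_one_iff.2 huw, ?_,
    hlam, ?_⟩
  · rw [NormedSpace.normalize, map_smul,
      rankOne_add_apply_of_isFixedPt hu (by linarith) hw hfix, smul_comm]
  · calc ‖NormedSpace.normalize (u + w) - u‖ ≤ 2 * ‖u + w - u‖ := norm_normalize_sub_le hu _
      _ ≤ 2 * (8 * ε / (3 * M)) := by rw [add_sub_cancel_left]; gcongr
      _ = 16 * ε / (3 * M) := by ring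

end

section

variable {n : ℕ}

lemma vnorm_eq_norm_toLp (x : Fin n → ℝ) : vnorm x = ‖WithLp.toLp 2 x‖ := by
  simp [vnorm, EuclideanSpace.norm_eq]

lemma norm_toEuclideanCLM_le_opNorm (A : Matrix (Fin n) (Fin n) ℝ) :
    ‖toEuclideanCLM (𝕜 := ℝ) A‖ ≤ opNorm A := by
  have hbdd : BddAbove {r | ∃ x : Fin n → ℝ, vnorm x = 1 ∧ r = vnorm (A *ᵥ x)} := by
    refine ⟨‖toEuclideanCLM (𝕜 := ℝ) A‖, ?_⟩
    rintro _ ⟨x, hx, rfl⟩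
    rw [vnorm_eq_norm_toLp] at hx ⊢
    simpa [hx] using (toEuclideanCLM (𝕜 := ℝ) A).le_opNorm (WithLp.toLp 2 x)
  refine ContinuousLinearMap.opNorm_le_of_unit_norm (Real.sSup_nonneg ?_) fun x hx =>
    le_csSup hbdd ⟨WithLp.ofLp x, ?_, ?_⟩
  · rintro _ ⟨x, -, rfl⟩
    exact Real.sqrt_nonneg _
  · simpa [vnorm_eq_norm_toLp] using hx
  · rw [vnorm_eq_norm_toLp]
    rfl

lemma norm_toLp_const_inv_sqrt (hn : 0 < n) :
    ‖(WithLp.toLp 2 fun _ : Fin n => 1 / √n : EuclideanSpace ℝ (Fin n))‖ = 1 := by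
  simp [EuclideanSpace.norm_eq, hn.ne']

lemma toEuclideanCLM_smul_ones (p : ℝ) :
    toEuclideanCLM (𝕜 := ℝ) (p • of fun _ _ : Fin n => (1 : ℝ)) =
      (n * p) • rankOne ℝ (WithLp.toLp 2 fun _ : Fin n => 1 / √n)
        (WithLp.toLp 2 fun _ : Fin n => 1 / √n) := by
  ext x i
  have hn : (0 : ℝ) < n := by exact_mod_cast i.pos
  simp [mulVec, dotProduct, PiLp.inner_apply, ← Finset.sum_mul, ← Finset.mul_sum]
  field_simp
  rw [Real.sq_sqrt hn.le]

end

theorem large_eigenvalue_near_ones_general (K : ℝ) :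
    ∃ N : ℝ, ∀ (n : ℕ) (p : ℝ), 0 < p → p < 1 → N ≤ (n : ℝ) * p →
      ∀ A : Matrix (Fin n) (Fin n) ℝ,
        opNorm (A - p • Matrix.of (fun _ _ : Fin n => (1 : ℝ))) ≤ K * Real.sqrt ((n : ℝ) * p) →
        ∃ (lam : ℝ) (v : Fin n → ℝ),
          vnorm v = 1 ∧ A.mulVec v = lam • v ∧ (n : ℝ) * p / 2 ≤ |lam| ∧
          vnorm (v - fun _ => 1 / Real.sqrt n) ≤ 16 * K / Real.sqrt ((n : ℝ) * p) := by
  refine ⟨64 * K ^ 2 + 1, fun n p _ _ hN A hA => ?_⟩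
  set u : EuclideanSpace ℝ (Fin n) := WithLp.toLp 2 fun _ => 1 / √n
  have hM : 0 < (n : ℝ) * p := by nlinarith
  have hn : 0 < n := Nat.pos_of_ne_zero (by rintro rfl; simp at hM)
  have hT := (norm_toEuclideanCLM_le_opNorm _).trans hA
  have hK : 0 ≤ K := nonneg_of_mul_nonneg_left ((norm_nonneg _).trans hT) (by positivity)
  have hεM : 8 * (K * √(n * p)) ≤ n * p := by
    have : 8 * K ≤ √(n * p) := Real.le_sqrt_of_sq_le (by nlinarith)
    nlinarith [Real.mul_self_sqrt hM.le, Real.sqrt_nonneg (n * p)]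
  have hA_eq : toEuclideanCLM (𝕜 := ℝ) A =
      ((n : ℝ) * p) • rankOne ℝ u u + toEuclideanCLM (𝕜 := ℝ) (A - p • of fun _ _ => 1) := by
    rw [map_sub, toEuclideanCLM_smul_ones]
    abel
  obtain ⟨lam, v, hv, hAv, hlam, hvu⟩ :=
    exists_eigenvector_near_of_rankOne_add hM (norm_toLp_const_inv_sqrt hn) hT hεM
  refine ⟨lam, WithLp.ofLp v, by simpa [vnorm_eq_norm_toLp] using hv, ?_, ?_, ?_⟩
  · rw [← hA_eq] at hAv
    simpa using congrArg WithLp.ofLp hAv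
  · linarith [le_abs_self lam]
  · calc vnorm (WithLp.ofLp v - fun _ => 1 / √n) = ‖v - u‖ := vnorm_eq_norm_toLp _
      _ ≤ 16 * (K * √(n * p)) / (3 * (n * p)) := hvu
      _ ≤ 16 * K / √(n * p) := by
        rw [div_le_div_iff₀ (by positivity) (by positivity), mul_assoc, mul_assoc,
          Real.mul_self_sqrt hM.le]
        nlinarith [mul_nonneg hK hM.le]

/-- any matrix close to `p J_n` in operator norm has a large real eigenvalue
`λ₀` with `|λ₀| ≥ np/2`, whose unit eigenvector is close to `n^{-1/2} 𝟏` (Lemma 5.6). -/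
theorem large_eigenvalue_near_ones (K : ℝ) (hK : 1 ≤ K) :
    ∃ N : ℝ, ∀ (n : ℕ) (p : ℝ), 0 < p → p < 1 → N ≤ (n : ℝ) * p →
      ∀ A : Matrix (Fin n) (Fin n) ℝ,
        opNorm (A - p • Matrix.of (fun _ _ : Fin n => (1 : ℝ))) ≤ K * Real.sqrt ((n : ℝ) * p) →
        ∃ (lam : ℝ) (v : Fin n → ℝ),
          vnorm v = 1 ∧ A.mulVec v = lam • v ∧ (n : ℝ) * p / 2 ≤ |lam| ∧
          vnorm (v - fun _ => 1 / Real.sqrt n) ≤ 16 * K / Real.sqrt ((n : ℝ) * p) :=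
  large_eigenvalue_near_ones_general K
end
end
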